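/- arXiv:1706.02866 — 2 statements merged into one kernel-verified Lean document; each statement's English description precedes it below -/
import Mathlib

section
/- Every morphism of globular sets between pasting schemes is a monomorphism (each component f_n is injective). -/
/-- A globular set: a family of sets `cells n` with source and target maps
satisfying the globular identities. -/
structure GlobSet : Type 1 where
  cells : ℕ → Type
  src : ∀ n, cells (n + 1) → cells n
  tgt : ∀ n, cells (n + 1) → cells n
  src_glob : ∀ n (x : cells (n + 2)), src n (src (n + 1) x) = src n (tgt (n + 1) x)
  tgt_glob : ∀ n (x : cells (n + 2)), tgt n (src (n + 1) x) = tgt n (tgt (n + 1) x)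

/-- The set `G_∞` of all cells of a globular set. -/
def GlobSet.allCells (G : GlobSet) : Type := Σ n, G.cells n

/-- Morphisms of globular sets. -/
@[ext]
structure GlobSet.Hom (G H : GlobSet) where
  app : ∀ n, G.cells n → H.cells n
  app_src : ∀ n (x : G.cells (n + 1)), app n (G.src n x) = H.src n (app (n + 1) x)
  app_tgt : ∀ n (x : G.cells (n + 1)), app n (G.tgt n x) = H.tgt n (app (n + 1) x)

/-- The one-step relation on cells generating `◁`: for every `(n+1)`-cell `x`,
`s_n(x) ◁ x` and `x ◁ t_n(x)`. -/
inductive GlobSet.RelStep (G : GlobSet) : G.allCells → G.allCells → Prop where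
  | src (n : ℕ) (x : G.cells (n + 1)) : G.RelStep ⟨n, G.src n x⟩ ⟨n + 1, x⟩
  | tgt (n : ℕ) (x : G.cells (n + 1)) : G.RelStep ⟨n + 1, x⟩ ⟨n, G.tgt n x⟩

/-- The relation `◁` on the cells of a globular set: the transitive closure of
the relation such that `s_n(x) ◁ x ◁ t_n(x)` for every `(n+1)`-cell `x`. -/
def GlobSet.Before (G : GlobSet) : G.allCells → G.allCells → Prop :=
  Relation.TransGen G.RelStep

/-- A globular set is `◁`-linear when for all cells `x`, `y`:
`x ◁ y` or `y ◁ x`, if and only if `x ≠ y`. -/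
def GlobSet.Linear (G : GlobSet) : Prop :=
  ∀ x y : G.allCells, (G.Before x y ∨ G.Before y x) ↔ x ≠ y 

/-- A pasting scheme: a nonempty finite `◁`-linear globular set. -/
def GlobSet.IsPastingScheme (G : GlobSet) : Prop :=
  Nonempty G.allCells ∧ Finite G.allCells ∧ G.Linear

/-! A morphism sends each generating step of `◁` to a step of the same kind, so it preserves `◁`.
Two distinct cells of `G` are `◁`-comparable by linearity of `G`, so their images are
`◁`-comparable, hence distinct by linearity of `H`. -/

namespace GlobSet

variable {G H : GlobSet}

lemma Linear.ne_of_before (hG : G.Linear) {x y : G.allCells} (h : G.Before x y) : x ≠ y :=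
  (hG x y).mp (Or.inl h)

def Hom.mapCell (f : Hom G H) (x : G.allCells) : H.allCells := ⟨x.1, f.app x.1 x.2⟩

lemma Hom.mapCell_relStep (f : Hom G H) {x y : G.allCells} (h : G.RelStep x y) :
    H.RelStep (f.mapCell x) (f.mapCell y) := by
  cases h with
  | src n x => simpa only [mapCell, f.app_src] using RelStep.src n (f.app _ x)
  | tgt n x => simpa only [mapCell, f.app_tgt] using RelStep.tgt n (f.app _ x)

lemma Hom.mapCell_before (f : Hom G H) {x y : G.allCells} (h : G.Before x y) :
    H.Before (f.mapCell x) (f.mapCell y) :=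
  Relation.TransGen.lift f.mapCell (fun _ _ => f.mapCell_relStep) _ _ h

lemma Hom.mapCell_injective (f : Hom G H) (hG : G.Linear) (hH : H.Linear) :
    Function.Injective f.mapCell := by
  intro x y hxy
  by_contra hne
  rcases (hG x y).mpr hne with h | h
  · exact hH.ne_of_before (f.mapCell_before h) hxy
  · exact hH.ne_of_before (f.mapCell_before h) hxy.symm

lemma Hom.app_injective (f : Hom G H) (hG : G.Linear) (hH : H.Linear) (n : ℕ) :
    Function.Injective (f.app n) := fun x y hxy =>
  sigma_mk_injective (f.mapCell_injective hG hH (congrArg (Sigma.mk n) hxy :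
    f.mapCell ⟨n, x⟩ = f.mapCell ⟨n, y⟩))

end GlobSet

/-- Every morphism of globular sets between pasting schemes is a monomorphism:
each component `f_n` is injective. -/
theorem hom_between_pasting_schemes_mono (G H : GlobSet)
    (hG : G.IsPastingScheme) (hH : H.IsPastingScheme)
    (f : GlobSet.Hom G H) (n : ℕ) :
    Function.Injective (f.app n) :=
  f.app_injective hG.2.2 hH.2.2 n
end

section
/- The only automorphism of a pasting scheme is the identity: every isomorphism of globular sets f : G → G with G a pasting scheme satisfies f = id_G. -/
/-- Identity morphism of globular sets. -/
def GlobSet.Hom.id (G : GlobSet) : GlobSet.Hom G G :=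
  ⟨fun _ x => x, fun _ _ => rfl, fun _ _ => rfl⟩

/-- Composition of morphisms of globular sets. -/
def GlobSet.Hom.comp {G H K : GlobSet} (f : GlobSet.Hom G H) (g : GlobSet.Hom H K) :
    GlobSet.Hom G K :=
  ⟨fun n x => g.app n (f.app n x),
    fun n x => by simp only [f.app_src, g.app_src],
    fun n x => by simp only [f.app_tgt, g.app_tgt]⟩


/-!
A morphism of globular sets maps `s_n(x) ◁ x ◁ t_n(x)` to `s_n(f x) ◁ f x ◁ t_n(f x)`, so it
preserves `◁`. In a pasting scheme `◁` is a strict total order on a finite set, and a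
`◁`-preserving self-map `F` of a finite strict total order is the identity: a cell with
`F x ◁ x` would give an infinite descending chain `x ▷ F x ▷ F² x ▷ ⋯`, and one with `x ◁ F x`
an infinite ascending one.
-/

theorem WellFounded.not_rel_apply_self {α : Type*} {r : α → α → Prop} (hwf : WellFounded r)
    {F : α → α} (hF : ∀ ⦃x y⦄, r x y → r (F x) (F y)) (x : α) : ¬ r (F x) x :=
  hwf.induction (C := fun x => ¬ r (F x) x) x fun x ih h => ih (F x) h (hF h)

theorem Finite.apply_eq_self_of_map_rel {α : Type*} [Finite α] (r : α → α → Prop)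
    [IsStrictTotalOrder α r] {F : α → α} (hF : ∀ ⦃x y⦄, r x y → r (F x) (F y)) (x : α) :
    F x = x := by
  rcases trichotomous_of r (F x) x with h | h | h
  · exact absurd h ((Finite.wellFounded_of_trans_of_irrefl r).not_rel_apply_self hF x)
  · exact h
  · exact absurd h
      ((Finite.wellFounded_of_trans_of_irrefl (Function.swap r)).not_rel_apply_self
        (fun _ _ h => hF h) x)

namespace GlobSet

theorem Linear.isStrictTotalOrder {G : GlobSet} (hG : G.Linear) :
    IsStrictTotalOrder G.allCells G.Before where
  trichotomous x y hxy hyx := by_contra fun hne => ((hG x y).mpr hne).elim hxy hyx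
  irrefl x h := (hG x x).mp (Or.inl h) rfl
  trans _ _ _ := Relation.TransGen.trans

namespace Hom

variable {G H : GlobSet}

def onCells (f : G.Hom H) (x : G.allCells) : H.allCells := ⟨x.1, f.app x.1 x.2⟩

theorem eq_id_of_onCells_eq_self {f : G.Hom G} (hf : ∀ x, f.onCells x = x) : f = Hom.id G := by
  ext n x
  exact eq_of_heq (Sigma.mk.inj_iff.mp (hf ⟨n, x⟩)).2

variable (f : G.Hom H)

theorem relStep_onCells {x y : G.allCells} (h : G.RelStep x y) :
    H.RelStep (f.onCells x) (f.onCells y) := by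
  cases h with
  | src n x => simpa only [onCells, f.app_src] using RelStep.src n (f.app (n + 1) x)
  | tgt n x => simpa only [onCells, f.app_tgt] using RelStep.tgt n (f.app (n + 1) x)

theorem before_onCells {x y : G.allCells} (h : G.Before x y) :
    H.Before (f.onCells x) (f.onCells y) :=
  h.lift f.onCells fun _ _ => f.relStep_onCells

end Hom

end GlobSet

theorem pasting_scheme_automorphism_id_general (G : GlobSet) (hG : G.IsPastingScheme)
    (f : GlobSet.Hom G G) :
    f = GlobSet.Hom.id G := by
  obtain ⟨-, _, hLin⟩ := hG
  have := hLin.isStrictTotalOrder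
  exact GlobSet.Hom.eq_id_of_onCells_eq_self
    (Finite.apply_eq_self_of_map_rel G.Before fun _ _ => f.before_onCells)

/-- The only automorphism of a pasting scheme is the identity: every
isomorphism of globular sets `f : G → G` (a morphism admitting a two-sided
inverse) with `G` a pasting scheme is the identity. -/
theorem pasting_scheme_automorphism_id (G : GlobSet) (hG : G.IsPastingScheme)
    (f : GlobSet.Hom G G) (hf : ∃ g : GlobSet.Hom G G,
      f.comp g = GlobSet.Hom.id G ∧ g.comp f = GlobSet.Hom.id G) :
    f = GlobSet.Hom.id G :=
  pasting_scheme_automorphism_id_general G hG f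
end
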